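/- arXiv:1909.01529 — 3 statements merged into one kernel-verified Lean document; each statement's English description precedes it below -/
import Mathlib

section
/- The spectral norm of a third order tensor A equals the square root of the spectral norm of the positive semi-definite biquadratic tensor T^{(3)} obtained by contracting A with itself on the third index. -/
noncomputable section

/-- A fourth order tensor `T` of size `d1 × d2 × d1 × d2` is biquadratic. -/
def Biquadratic {d1 d2 : ℕ} (T : Fin d1 → Fin d2 → Fin d1 → Fin d2 → ℝ) : Prop :=
  ∀ i j p q, T i j p q = T p j i q ∧ T i j p q = T p q i j

/-- `⟨T, x ⊗ y ⊗ x ⊗ y⟩`. -/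
def bform {d1 d2 : ℕ} (T : Fin d1 → Fin d2 → Fin d1 → Fin d2 → ℝ)
    (x : Fin d1 → ℝ) (y : Fin d2 → ℝ) : ℝ :=
  ∑ i, ∑ j, ∑ p, ∑ q, T i j p q * x i * y j * x p * y q

/-- The spectral norm of a fourth order tensor. -/
noncomputable def bSpec {d1 d2 : ℕ} (T : Fin d1 → Fin d2 → Fin d1 → Fin d2 → ℝ) : ℝ :=
  sSup { r : ℝ | ∃ x : Fin d1 → ℝ, ∃ y : Fin d2 → ℝ,
    (∑ i, x i ^ 2 = 1) ∧ (∑ j, y j ^ 2 = 1) ∧ r = |bform T x y| }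

/-- Contraction of `A` with itself on the third index. -/
def T3 {d1 d2 d3 : ℕ} (A : Fin d1 → Fin d2 → Fin d3 → ℝ) :
    Fin d1 → Fin d2 → Fin d1 → Fin d2 → ℝ :=
  fun i j p q => ∑ k, A i j k * A p q k

/-- The spectral norm of a third order tensor. -/
noncomputable def specA {d1 d2 d3 : ℕ} (A : Fin d1 → Fin d2 → Fin d3 → ℝ) : ℝ :=
  sSup { r : ℝ | ∃ x : Fin d1 → ℝ, ∃ y : Fin d2 → ℝ, ∃ z : Fin d3 → ℝ,
    (∑ i, x i ^ 2 = 1) ∧ (∑ j, y j ^ 2 = 1) ∧ (∑ k, z k ^ 2 = 1) ∧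
    r = ∑ i, ∑ j, ∑ k, A i j k * x i * y j * z k }

/-!
For unit vectors `x, y` let `g = A(x, y, ·) ∈ ℝ^{d3}`. Then `A(x, y, z) = ⟨g, z⟩` and
`T^{(3)}(x, y, x, y) = ‖g‖²`. By Cauchy–Schwarz, with equality at `z = g / ‖g‖`, the maximum of
`A(x, y, z)` over unit vectors `z` is `‖g‖`; maximizing over `x` and `y` gives `‖A‖ = √‖T^{(3)}‖`.
-/

open Finset

section UnitVector

variable {ι : Type*} [Fintype ι]

lemma abs_le_one_of_sum_sq_eq_one {x : ι → ℝ} (hx : ∑ i, x i ^ 2 = 1) (i : ι) : |x i| ≤ 1 := by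
  rw [← sq_le_one_iff_abs_le_one, ← hx]
  exact single_le_sum (fun j _ => sq_nonneg (x j)) (mem_univ i)

lemma sum_mul_le_sqrt_sum_sq (v : ι → ℝ) {z : ι → ℝ} (hz : ∑ k, z k ^ 2 = 1) :
    ∑ k, v k * z k ≤ √(∑ k, v k ^ 2) := by
  refine (le_abs_self _).trans (Real.abs_le_sqrt ?_)
  simpa [hz] using sum_mul_sq_le_sq_mul_sq univ v z

lemma exists_sum_sq_eq_one_sum_mul_eq_sqrt (v : ι → ℝ) (hv : ∑ k, v k ^ 2 ≠ 0) :
    ∃ z : ι → ℝ, ∑ k, z k ^ 2 = 1 ∧ ∑ k, v k * z k = √(∑ k, v k ^ 2) := by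
  set c := √(∑ k, v k ^ 2)
  have hc : 0 < c := Real.sqrt_pos.2 ((sum_nonneg fun k _ => sq_nonneg (v k)).lt_of_ne' hv)
  have hc_sq : c ^ 2 = ∑ k, v k ^ 2 := Real.sq_sqrt (sum_nonneg fun k _ => sq_nonneg (v k))
  refine ⟨fun k => v k / c, ?_, ?_⟩
  · simp_rw [div_pow, ← sum_div, ← hc_sq]
    exact div_self (by positivity)
  · calc ∑ k, v k * (v k / c) = (∑ k, v k ^ 2) / c := by
          rw [sum_div]
          exact sum_congr rfl fun k _ => by ring
      _ = c := by rw [← hc_sq]; field_simp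

end UnitVector

section Contraction

variable {ι κ μ : Type*} [Fintype ι] [Fintype κ] [Fintype μ]

def contract12 (A : ι → κ → μ → ℝ) (x : ι → ℝ) (y : κ → ℝ) (k : μ) : ℝ :=
  ∑ i, ∑ j, A i j k * x i * y j

lemma sum_mul_mul_mul_eq_sum_contract12_mul (A : ι → κ → μ → ℝ) (x : ι → ℝ) (y : κ → ℝ)
    (z : μ → ℝ) :
    ∑ i, ∑ j, ∑ k, A i j k * x i * y j * z k = ∑ k, contract12 A x y k * z k := by
  simp only [contract12, sum_mul]
  exact (sum_congr rfl fun i _ => sum_comm).trans sum_comm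

lemma abs_sum_mul_mul_mul_le_sum_abs (A : ι → κ → μ → ℝ) {x : ι → ℝ} {y : κ → ℝ}
    {z : μ → ℝ} (hx : ∀ i, |x i| ≤ 1) (hy : ∀ j, |y j| ≤ 1) (hz : ∀ k, |z k| ≤ 1) :
    |∑ i, ∑ j, ∑ k, A i j k * x i * y j * z k| ≤ ∑ i, ∑ j, ∑ k, |A i j k| := by
  refine (abs_sum_le_sum_abs _ _).trans (sum_le_sum fun i _ => ?_)
  refine (abs_sum_le_sum_abs _ _).trans (sum_le_sum fun j _ => ?_)
  refine (abs_sum_le_sum_abs _ _).trans (sum_le_sum fun k _ => ?_)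
  simp only [abs_mul]
  calc |A i j k| * |x i| * |y j| * |z k| ≤ |A i j k| * 1 * 1 * 1 := by
        gcongr
        exacts [hx i, hy j, hz k]
    _ = |A i j k| := by ring

end Contraction

section SpectralNorm

variable {d1 d2 d3 : ℕ} (A : Fin d1 → Fin d2 → Fin d3 → ℝ)

lemma bform_T3_eq_sum_sq (x : Fin d1 → ℝ) (y : Fin d2 → ℝ) :
    bform (T3 A) x y = ∑ k, contract12 A x y k ^ 2 := by
  simp only [bform, T3, contract12, sq, sum_mul, mul_sum]
  symm
  rw [sum_comm]
  refine sum_congr rfl fun i _ => ?_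
  rw [sum_comm]
  refine sum_congr rfl fun j _ => ?_
  rw [sum_comm]
  refine sum_congr rfl fun p _ => ?_
  rw [sum_comm]
  refine sum_congr rfl fun q _ => sum_congr rfl fun k _ => ?_
  ring

lemma bform_T3_nonneg (x : Fin d1 → ℝ) (y : Fin d2 → ℝ) : 0 ≤ bform (T3 A) x y := by
  rw [bform_T3_eq_sum_sq]
  exact sum_nonneg fun k _ => sq_nonneg _

lemma le_specA {x : Fin d1 → ℝ} {y : Fin d2 → ℝ} {z : Fin d3 → ℝ} (hx : ∑ i, x i ^ 2 = 1)
    (hy : ∑ j, y j ^ 2 = 1) (hz : ∑ k, z k ^ 2 = 1) :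
    ∑ i, ∑ j, ∑ k, A i j k * x i * y j * z k ≤ specA A := by
  refine le_csSup ⟨∑ i, ∑ j, ∑ k, |A i j k|, ?_⟩ ⟨x, y, z, hx, hy, hz, rfl⟩
  rintro _ ⟨x, y, z, hx, hy, hz, rfl⟩
  exact (le_abs_self _).trans (abs_sum_mul_mul_mul_le_sum_abs A
    (abs_le_one_of_sum_sq_eq_one hx) (abs_le_one_of_sum_sq_eq_one hy)
    (abs_le_one_of_sum_sq_eq_one hz))

lemma specA_nonneg : 0 ≤ specA A := by
  by_cases h : ∃ (x : Fin d1 → ℝ) (y : Fin d2 → ℝ) (z : Fin d3 → ℝ),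
      ∑ i, x i ^ 2 = 1 ∧ ∑ j, y j ^ 2 = 1 ∧ ∑ k, z k ^ 2 = 1
  · obtain ⟨x, y, z, hx, hy, hz⟩ := h
    have h_pos := le_specA A hx hy hz
    have h_neg := le_specA A (x := -x) (by simpa using hx) hy hz
    simp only [Pi.neg_apply, mul_neg, neg_mul, sum_neg_distrib] at h_neg
    linarith
  · -- some `dᵢ = 0`: the defining set is empty and `sSup ∅ = 0`
    push Not at h
    unfold specA
    refine ((congrArg sSup (Set.eq_empty_of_forall_notMem ?_)).trans Real.sSup_empty).ge
    rintro _ ⟨x, y, z, hx, hy, hz, -⟩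
    exact h x y z hx hy hz

lemma sqrt_sum_sq_contract12_le_specA {x : Fin d1 → ℝ} {y : Fin d2 → ℝ}
    (hx : ∑ i, x i ^ 2 = 1) (hy : ∑ j, y j ^ 2 = 1) :
    √(∑ k, contract12 A x y k ^ 2) ≤ specA A := by
  by_cases h0 : ∑ k, contract12 A x y k ^ 2 = 0
  · rw [h0, Real.sqrt_zero]
    exact specA_nonneg A
  · obtain ⟨z, hz, hgz⟩ := exists_sum_sq_eq_one_sum_mul_eq_sqrt _ h0
    rw [← hgz, ← sum_mul_mul_mul_eq_sum_contract12_mul]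
    exact le_specA A hx hy hz

lemma abs_bform_T3_le_specA_sq {x : Fin d1 → ℝ} {y : Fin d2 → ℝ}
    (hx : ∑ i, x i ^ 2 = 1) (hy : ∑ j, y j ^ 2 = 1) :
    |bform (T3 A) x y| ≤ specA A ^ 2 := by
  rw [abs_of_nonneg (bform_T3_nonneg A x y), bform_T3_eq_sum_sq,
    ← Real.sqrt_le_left (specA_nonneg A)]
  exact sqrt_sum_sq_contract12_le_specA A hx hy

lemma bSpec_T3_le_specA_sq : bSpec (T3 A) ≤ specA A ^ 2 := by
  refine Real.sSup_le ?_ (sq_nonneg _)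
  rintro _ ⟨x, y, hx, hy, rfl⟩
  exact abs_bform_T3_le_specA_sq A hx hy

lemma specA_le_sqrt_bSpec_T3 : specA A ≤ √(bSpec (T3 A)) := by
  refine Real.sSup_le ?_ (Real.sqrt_nonneg _)
  rintro _ ⟨x, y, z, hx, hy, hz, rfl⟩
  rw [sum_mul_mul_mul_eq_sum_contract12_mul]
  refine (sum_mul_le_sqrt_sum_sq _ hz).trans (Real.sqrt_le_sqrt ?_)
  have h_bdd : BddAbove {r | ∃ (x : Fin d1 → ℝ) (y : Fin d2 → ℝ),
      ∑ i, x i ^ 2 = 1 ∧ ∑ j, y j ^ 2 = 1 ∧ r = |bform (T3 A) x y|} := by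
    refine ⟨specA A ^ 2, ?_⟩
    rintro _ ⟨x, y, hx, hy, rfl⟩
    exact abs_bform_T3_le_specA_sq A hx hy
  rw [← bform_T3_eq_sum_sq]
  exact (le_abs_self _).trans (le_csSup h_bdd ⟨x, y, hx, hy, rfl⟩)

end SpectralNorm

theorem stmt10 {d1 d2 d3 : ℕ} (A : Fin d1 → Fin d2 → Fin d3 → ℝ) :
    specA A = Real.sqrt (bSpec (T3 A)) :=
  le_antisymm (specA_le_sqrt_bSpec_T3 A)
    ((Real.sqrt_le_left (specA_nonneg A)).2 (bSpec_T3_le_specA_sq A))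
end
end

section
/- For a third order tensor A ∈ ℝ^{d1×d2×d3} and the contracted biquadratic tensor T^{(3)}, the nuclear norm satisfies ‖T^{(3)}‖_* ≥ (1/d3) ‖A‖_*². -/
noncomputable section

/-- Nuclear norm of a third order tensor. -/
noncomputable def nuc3 {d1 d2 d3 : ℕ} (A : Fin d1 → Fin d2 → Fin d3 → ℝ) : ℝ :=
  sInf { s : ℝ | ∃ r : ℕ, ∃ lam : Fin r → ℝ, ∃ u : Fin r → Fin d1 → ℝ,
    ∃ v : Fin r → Fin d2 → ℝ, ∃ w : Fin r → Fin d3 → ℝ,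
    (∀ m, ∑ i, u m i ^ 2 = 1) ∧ (∀ m, ∑ j, v m j ^ 2 = 1) ∧ (∀ m, ∑ k, w m k ^ 2 = 1) ∧
    (∀ i j k, A i j k = ∑ m, lam m * u m i * v m j * w m k) ∧
    s = ∑ m, |lam m| }

/-- Nuclear norm of a fourth order tensor of size `d1 × d2 × d1 × d2`. -/
noncomputable def nuc4 {d1 d2 : ℕ} (T : Fin d1 → Fin d2 → Fin d1 → Fin d2 → ℝ) : ℝ :=
  sInf { s : ℝ | ∃ r : ℕ, ∃ lam : Fin r → ℝ, ∃ u : Fin r → Fin d1 → ℝ,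
    ∃ v : Fin r → Fin d2 → ℝ, ∃ w : Fin r → Fin d1 → ℝ, ∃ t : Fin r → Fin d2 → ℝ,
    (∀ m, ∑ i, u m i ^ 2 = 1) ∧ (∀ m, ∑ j, v m j ^ 2 = 1) ∧
    (∀ m, ∑ i, w m i ^ 2 = 1) ∧ (∀ m, ∑ j, t m j ^ 2 = 1) ∧
    (∀ i j p q, T i j p q = ∑ m, lam m * u m i * v m j * w m p * t m q) ∧
    s = ∑ m, |lam m| }

open Finset Metric

-- Fubini identity 1
lemma fub1 {α1 α2 β : Type*} [Fintype α1] [Fintype α2] [Fintype β] (f g : α1 → α2 → β → ℝ) :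
    ∑ i, ∑ j, ∑ p, ∑ q, (∑ b, f i j b * f p q b) * (∑ b, g i j b * g p q b)
      = ∑ b, ∑ b', (∑ i, ∑ j, f i j b * g i j b') ^ 2 := by
  have L : ∑ i, ∑ j, ∑ p, ∑ q, (∑ b, f i j b * f p q b) * (∑ b, g i j b * g p q b)
      = ∑ a : α1 × α2, ∑ a' : α1 × α2,
          (∑ b, f a.1 a.2 b * f a'.1 a'.2 b) * (∑ b, g a.1 a.2 b * g a'.1 a'.2 b) := by
    rw [Fintype.sum_prod_type]
    refine Finset.sum_congr rfl fun i _ => ?_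
    refine Finset.sum_congr rfl fun j _ => ?_
    rw [Fintype.sum_prod_type]
  have R : ∑ b, ∑ b', (∑ i, ∑ j, f i j b * g i j b') ^ 2
      = ∑ bb : β × β, (∑ a : α1 × α2, f a.1 a.2 bb.1 * g a.1 a.2 bb.2) ^ 2 := by
    rw [Fintype.sum_prod_type]
    refine Finset.sum_congr rfl fun b _ => ?_
    refine Finset.sum_congr rfl fun b' _ => ?_
    rw [Fintype.sum_prod_type]
  rw [L, R]
  calc ∑ a : α1 × α2, ∑ a' : α1 × α2,
          (∑ b, f a.1 a.2 b * f a'.1 a'.2 b) * (∑ b, g a.1 a.2 b * g a'.1 a'.2 b)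
      = ∑ a : α1 × α2, ∑ a' : α1 × α2, ∑ bb : β × β,
          (f a.1 a.2 bb.1 * g a.1 a.2 bb.2) * (f a'.1 a'.2 bb.1 * g a'.1 a'.2 bb.2) := by
        refine Finset.sum_congr rfl fun a _ => Finset.sum_congr rfl fun a' _ => ?_
        rw [Finset.sum_mul_sum, Fintype.sum_prod_type]
        exact Finset.sum_congr rfl fun b _ => Finset.sum_congr rfl fun b' _ => by ring
    _ = ∑ bb : β × β, ∑ a : α1 × α2, ∑ a' : α1 × α2,
          (f a.1 a.2 bb.1 * g a.1 a.2 bb.2) * (f a'.1 a'.2 bb.1 * g a'.1 a'.2 bb.2) := by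
        calc ∑ a : α1 × α2, ∑ a' : α1 × α2, ∑ bb : β × β,
          (f a.1 a.2 bb.1 * g a.1 a.2 bb.2) * (f a'.1 a'.2 bb.1 * g a'.1 a'.2 bb.2)
            = ∑ a : α1 × α2, ∑ bb : β × β, ∑ a' : α1 × α2,
          (f a.1 a.2 bb.1 * g a.1 a.2 bb.2) * (f a'.1 a'.2 bb.1 * g a'.1 a'.2 bb.2) :=
              Finset.sum_congr rfl fun a _ => Finset.sum_comm
          _ = _ := Finset.sum_comm
    _ = ∑ bb : β × β, (∑ a : α1 × α2, f a.1 a.2 bb.1 * g a.1 a.2 bb.2) ^ 2 := by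
        refine Finset.sum_congr rfl fun bb _ => ?_
        rw [sq, Finset.sum_mul_sum]

lemma fub2 {α1 α2 β : Type*} [Fintype α1] [Fintype α2] [Fintype β] (x : α1 → α2 → β → ℝ)
    (U W : α1 → α2 → ℝ) :
    ∑ i, ∑ j, ∑ p, ∑ q, (U i j * W p q) * (∑ b, x i j b * x p q b)
      = ∑ b, (∑ i, ∑ j, x i j b * U i j) * (∑ p, ∑ q, x p q b * W p q) := by
  have L : ∑ i, ∑ j, ∑ p, ∑ q, (U i j * W p q) * (∑ b, x i j b * x p q b)
      = ∑ a : α1 × α2, ∑ a' : α1 × α2,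
          (U a.1 a.2 * W a'.1 a'.2) * (∑ b, x a.1 a.2 b * x a'.1 a'.2 b) := by
    rw [Fintype.sum_prod_type]
    refine Finset.sum_congr rfl fun i _ => ?_
    refine Finset.sum_congr rfl fun j _ => ?_
    rw [Fintype.sum_prod_type]
  have R : ∀ b : β, (∑ i, ∑ j, x i j b * U i j) = ∑ a : α1 × α2, x a.1 a.2 b * U a.1 a.2 := by
    intro b; rw [Fintype.sum_prod_type]
  have R' : ∀ b : β, (∑ p, ∑ q, x p q b * W p q) = ∑ a : α1 × α2, x a.1 a.2 b * W a.1 a.2 := by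
    intro b; rw [Fintype.sum_prod_type]
  rw [L]
  calc ∑ a : α1 × α2, ∑ a' : α1 × α2,
          (U a.1 a.2 * W a'.1 a'.2) * (∑ b, x a.1 a.2 b * x a'.1 a'.2 b)
      = ∑ a : α1 × α2, ∑ a' : α1 × α2, ∑ b,
          (x a.1 a.2 b * U a.1 a.2) * (x a'.1 a'.2 b * W a'.1 a'.2) := by
        refine Finset.sum_congr rfl fun a _ => Finset.sum_congr rfl fun a' _ => ?_
        rw [Finset.mul_sum]
        exact Finset.sum_congr rfl fun b _ => by ring
    _ = ∑ b, ∑ a : α1 × α2, ∑ a' : α1 × α2,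
          (x a.1 a.2 b * U a.1 a.2) * (x a'.1 a'.2 b * W a'.1 a'.2) := by
        calc ∑ a : α1 × α2, ∑ a' : α1 × α2, ∑ b,
          (x a.1 a.2 b * U a.1 a.2) * (x a'.1 a'.2 b * W a'.1 a'.2)
            = ∑ a : α1 × α2, ∑ b, ∑ a' : α1 × α2,
          (x a.1 a.2 b * U a.1 a.2) * (x a'.1 a'.2 b * W a'.1 a'.2) :=
              Finset.sum_congr rfl fun a _ => Finset.sum_comm
          _ = _ := Finset.sum_comm
    _ = ∑ b, (∑ a : α1 × α2, x a.1 a.2 b * U a.1 a.2) * (∑ a' : α1 × α2, x a'.1 a'.2 b * W a'.1 a'.2) := by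
        refine Finset.sum_congr rfl fun b _ => ?_
        rw [Finset.sum_mul_sum]
  refine Finset.sum_congr rfl fun b _ => ?_
  rw [R b, R' b]

lemma myIsCompact_convexHull {V : Type*} [NormedAddCommGroup V] [NormedSpace ℝ V]
    [FiniteDimensional ℝ V] {S : Set V} (hS : IsCompact S) (hne : S.Nonempty) :
    IsCompact (convexHull ℝ S) := by
  classical
  obtain ⟨s₀, hs₀⟩ := hne
  set N := Module.finrank ℝ V + 1 with hN
  set Φ : (Fin N → ℝ) × (Fin N → V) → V := fun p => ∑ i, p.1 i • p.2 i with hΦdef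
  have hΦ : Continuous Φ := by
    apply continuous_finset_sum
    intro i _
    exact ((continuous_apply i).comp continuous_fst).smul
      ((continuous_apply i).comp continuous_snd)
  have hD : IsCompact ((stdSimplex ℝ (Fin N)) ×ˢ (Set.univ.pi fun _ : Fin N => S)) :=
    (isCompact_stdSimplex (𝕜 := ℝ) (ι := Fin N)).prod (isCompact_univ_pi fun _ => hS)
  have key : convexHull ℝ S = Φ '' ((stdSimplex ℝ (Fin N)) ×ˢ (Set.univ.pi fun _ : Fin N => S)) := by
    apply Set.Subset.antisymm
    · intro x hx
      obtain ⟨ι, hfin, z, w, hrange, hindep, hpos, hsum, hx⟩ :=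
        eq_pos_convex_span_of_mem_convexHull hx
      have hcard : Fintype.card ι ≤ N := hindep.card_le_finrank_succ.trans
        (Nat.add_le_add_right (Submodule.finrank_le _) 1)
      obtain ⟨e⟩ : Nonempty (ι ↪ Fin N) := Function.Embedding.nonempty_of_card_le (by simpa)
      set w' : Fin N → ℝ := fun j => ∑ i ∈ Finset.univ.filter (fun i => e i = j), w i with hw'
      set z' : Fin N → V := fun j => if h : ∃ i, e i = j then z h.choose else s₀ with hz'
      have hz'e : ∀ i, z' (e i) = z i := by
        intro i
        have h : ∃ i', e i' = e i := ⟨i, rfl⟩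
        have := h.choose_spec
        simp only [hz', dif_pos h]
        rw [e.injective this]
      refine ⟨(w', z'), ⟨?_, ?_⟩, ?_⟩
      · constructor
        · intro j; exact Finset.sum_nonneg fun i _ => (hpos i).le
        · rw [← hsum]
          exact Finset.sum_fiberwise _ _ _
      · intro j _
        simp only [hz']
        split
        · next h => exact hrange (Set.mem_range_self _)
        · exact hs₀
      · simp only [hΦdef, ← hx]
        have : ∀ j, w' j • z' j = ∑ i ∈ Finset.univ.filter (fun i => e i = j), w i • z' j := by
          intro j; rw [Finset.sum_smul]
        rw [show (∑ j, w' j • z' j) = ∑ j, ∑ i ∈ Finset.univ.filter (fun i => e i = j), w i • z' j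
          from Finset.sum_congr rfl fun j _ => this j]
        rw [show (∑ j, ∑ i ∈ Finset.univ.filter (fun i => e i = j), w i • z' j)
            = ∑ j, ∑ i ∈ Finset.univ.filter (fun i => e i = j), w i • z' (e i) from
          Finset.sum_congr rfl fun j _ => Finset.sum_congr rfl fun i hi => by
            rw [(Finset.mem_filter.mp hi).2]]
        rw [Finset.sum_fiberwise]
        exact Finset.sum_congr rfl fun i _ => by rw [hz'e i]
    · rintro x ⟨⟨w, z⟩, ⟨hw, hz⟩, rfl⟩
      exact (convex_convexHull ℝ S).sum_mem (fun i _ => hw.1 i) hw.2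
        (fun i _ => subset_convexHull ℝ S (hz i (Set.mem_univ i)))
  rw [key]
  exact hD.image hΦ

/-- basis vector -/
def bv {d : ℕ} (i0 : Fin d) : Fin d → ℝ := fun i => if i = i0 then 1 else 0

lemma bv_unit {d : ℕ} (i0 : Fin d) : ∑ i, bv i0 i ^ 2 = 1 := by
  simp [bv, ite_pow, Finset.sum_ite_eq']

lemma nuc4_nonneg {d1 d2 : ℕ} (T : Fin d1 → Fin d2 → Fin d1 → Fin d2 → ℝ) : 0 ≤ nuc4 T := by
  apply Real.sInf_nonneg
  rintro s ⟨r, lam, u, v, w, t, _, _, _, _, _, rfl⟩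
  exact Finset.sum_nonneg fun m _ => abs_nonneg _

lemma nuc3_nonneg {d1 d2 d3 : ℕ} (A : Fin d1 → Fin d2 → Fin d3 → ℝ) : 0 ≤ nuc3 A := by
  apply Real.sInf_nonneg
  rintro s ⟨r, lam, u, v, w, _, _, _, _, rfl⟩
  exact Finset.sum_nonneg fun m _ => abs_nonneg _

lemma nuc4_set_nonempty {d1 d2 : ℕ} (T : Fin d1 → Fin d2 → Fin d1 → Fin d2 → ℝ) :
    { s : ℝ | ∃ r : ℕ, ∃ lam : Fin r → ℝ, ∃ u : Fin r → Fin d1 → ℝ,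
    ∃ v : Fin r → Fin d2 → ℝ, ∃ w : Fin r → Fin d1 → ℝ, ∃ t : Fin r → Fin d2 → ℝ,
    (∀ m, ∑ i, u m i ^ 2 = 1) ∧ (∀ m, ∑ j, v m j ^ 2 = 1) ∧
    (∀ m, ∑ i, w m i ^ 2 = 1) ∧ (∀ m, ∑ j, t m j ^ 2 = 1) ∧
    (∀ i j p q, T i j p q = ∑ m, lam m * u m i * v m j * w m p * t m q) ∧
    s = ∑ m, |lam m| }.Nonempty := by
  classical
  set σ := Fintype.equivFin (Fin d1 × Fin d2 × Fin d1 × Fin d2) with hσ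
  set r := Fintype.card (Fin d1 × Fin d2 × Fin d1 × Fin d2) with hr
  refine ⟨_, r, fun m => T (σ.symm m).1 (σ.symm m).2.1 (σ.symm m).2.2.1 (σ.symm m).2.2.2,
    fun m => bv (σ.symm m).1, fun m => bv (σ.symm m).2.1,
    fun m => bv (σ.symm m).2.2.1, fun m => bv (σ.symm m).2.2.2,
    fun m => bv_unit _, fun m => bv_unit _, fun m => bv_unit _, fun m => bv_unit _, ?_, rfl⟩
  intro i j p q
  simp only []
  rw [show (∑ m : Fin r, T (σ.symm m).1 (σ.symm m).2.1 (σ.symm m).2.2.1 (σ.symm m).2.2.2 *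
      bv (σ.symm m).1 i * bv (σ.symm m).2.1 j * bv (σ.symm m).2.2.1 p * bv (σ.symm m).2.2.2 q)
    = ∑ a : Fin d1 × Fin d2 × Fin d1 × Fin d2, T a.1 a.2.1 a.2.2.1 a.2.2.2 *
      bv a.1 i * bv a.2.1 j * bv a.2.2.1 p * bv a.2.2.2 q from
    Equiv.sum_comp σ.symm (fun a : Fin d1 × Fin d2 × Fin d1 × Fin d2 =>
      T a.1 a.2.1 a.2.2.1 a.2.2.2 * bv a.1 i * bv a.2.1 j * bv a.2.2.1 p * bv a.2.2.2 q)]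
  rw [Fintype.sum_prod_type]
  simp only [Fintype.sum_prod_type, bv, mul_ite, mul_one, mul_zero, ite_mul, zero_mul,
    Finset.sum_ite_eq', Finset.sum_ite_eq, Finset.mem_univ, if_true]

lemma sum_swap5 {μ α1 α2 α3 α4 : Type*} [Fintype μ] [Fintype α1] [Fintype α2] [Fintype α3]
    [Fintype α4] (f : μ → α1 → α2 → α3 → α4 → ℝ) :
    ∑ i, ∑ j, ∑ p, ∑ q, ∑ m, f m i j p q = ∑ m, ∑ i, ∑ j, ∑ p, ∑ q, f m i j p q := by
  calc ∑ i, ∑ j, ∑ p, ∑ q, ∑ m, f m i j p q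
      = ∑ i, ∑ j, ∑ p, ∑ m, ∑ q, f m i j p q :=
        Finset.sum_congr rfl fun i _ => Finset.sum_congr rfl fun j _ =>
          Finset.sum_congr rfl fun p _ => Finset.sum_comm
    _ = ∑ i, ∑ j, ∑ m, ∑ p, ∑ q, f m i j p q :=
        Finset.sum_congr rfl fun i _ => Finset.sum_congr rfl fun j _ => Finset.sum_comm
    _ = ∑ i, ∑ m, ∑ j, ∑ p, ∑ q, f m i j p q :=
        Finset.sum_congr rfl fun i _ => Finset.sum_comm
    _ = ∑ m, ∑ i, ∑ j, ∑ p, ∑ q, f m i j p q := Finset.sum_comm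

lemma mul_sum4 {α1 α2 α3 α4 : Type*} [Fintype α1] [Fintype α2] [Fintype α3] [Fintype α4]
    (c : ℝ) (f : α1 → α2 → α3 → α4 → ℝ) :
    c * ∑ i, ∑ j, ∑ p, ∑ q, f i j p q = ∑ i, ∑ j, ∑ p, ∑ q, c * f i j p q := by
  simp only [Finset.mul_sum]

lemma claimg {d1 d2 d3 : ℕ} (X : Fin d1 → Fin d2 → Fin d3 → ℝ)
    (hX : ∀ (u : Fin d1 → ℝ) (v : Fin d2 → ℝ) (w : Fin d3 → ℝ),
      (∑ i, u i ^ 2 = 1) → (∑ j, v j ^ 2 = 1) → (∑ k, w k ^ 2 = 1) →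
      |∑ k, (∑ i, ∑ j, X i j k * (u i * v j)) * w k| ≤ 1)
    (u : Fin d1 → ℝ) (v : Fin d2 → ℝ) (hu : ∑ i, u i ^ 2 = 1) (hv : ∑ j, v j ^ 2 = 1) :
    ∑ k, (∑ i, ∑ j, X i j k * (u i * v j)) ^ 2 ≤ 1 := by
  set g : Fin d3 → ℝ := fun k => ∑ i, ∑ j, X i j k * (u i * v j) with hg
  set G2 : ℝ := ∑ k, g k ^ 2 with hG2
  rcases le_or_gt G2 1 with h | h
  · exact h
  exfalso
  have hG2pos : 0 < G2 := lt_trans one_pos h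
  set G : ℝ := Real.sqrt G2 with hG
  have hGpos : 0 < G := Real.sqrt_pos.mpr hG2pos
  have hsq : G * G = G2 := Real.mul_self_sqrt hG2pos.le
  have hw : ∑ k, (g k / G) ^ 2 = 1 := by
    have : ∀ k, (g k / G) ^ 2 = g k ^ 2 / G2 := by
      intro k; rw [div_pow]; congr 1; rw [sq, hsq]
    rw [Finset.sum_congr rfl fun k _ => this k, ← Finset.sum_div, ← hG2,
      div_self hG2pos.ne']
  have hb := hX u v (fun k => g k / G) hu hv hw
  have hval : (∑ k, g k * (g k / G)) = G2 / G := by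
    rw [show (∑ k, g k * (g k / G)) = ∑ k, g k ^ 2 / G from
      Finset.sum_congr rfl fun k _ => by rw [← mul_div_assoc, ← sq]]
    rw [← Finset.sum_div, ← hG2]
  rw [show (∑ k, (∑ i, ∑ j, X i j k * (u i * v j)) * (g k / G)) = G2 / G from hval] at hb
  rw [abs_of_nonneg (div_nonneg hG2pos.le hGpos.le)] at hb
  have hle : G2 ≤ G := (div_le_one hGpos).mp hb
  nlinarith

lemma key {d1 d2 d3 : ℕ} (A X : Fin d1 → Fin d2 → Fin d3 → ℝ)
    (hX : ∀ (u : Fin d1 → ℝ) (v : Fin d2 → ℝ) (w : Fin d3 → ℝ),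
      (∑ i, u i ^ 2 = 1) → (∑ j, v j ^ 2 = 1) → (∑ k, w k ^ 2 = 1) →
      |∑ k, (∑ i, ∑ j, X i j k * (u i * v j)) * w k| ≤ 1) :
    (∑ k, ∑ i, ∑ j, A i j k * X i j k) ^ 2 ≤ (d3 : ℝ) * nuc4 (T3 A) := by
  classical
  set c : Fin d3 → ℝ := fun k => ∑ i, ∑ j, A i j k * X i j k with hc
  have step1 : (∑ k, c k) ^ 2 ≤ (d3 : ℝ) * ∑ k, c k ^ 2 := by
    have := sq_sum_le_card_mul_sum_sq (s := (Finset.univ : Finset (Fin d3))) (f := c)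
    simpa using this
  have step2 : ∑ k, c k ^ 2 ≤ ∑ k, ∑ k', (∑ i, ∑ j, A i j k * X i j k') ^ 2 :=
    Finset.sum_le_sum fun k _ =>
      Finset.single_le_sum (f := fun k' => (∑ i, ∑ j, A i j k * X i j k') ^ 2)
        (fun k' _ => sq_nonneg _) (Finset.mem_univ k)
  have step3 : ∑ i, ∑ j, ∑ p, ∑ q, T3 A i j p q * (∑ k, X i j k * X p q k)
      = ∑ k, ∑ k', (∑ i, ∑ j, A i j k * X i j k') ^ 2 := by
    have := fub1 (fun i j b => A i j b) (fun i j b => X i j b)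
    simpa [T3] using this
  have step4 : ∑ i, ∑ j, ∑ p, ∑ q, T3 A i j p q * (∑ k, X i j k * X p q k) ≤ nuc4 (T3 A) := by
    rw [nuc4]
    apply le_csInf (nuc4_set_nonempty _)
    rintro s ⟨r, lam, u, v, w, t, hu, hv, hw, ht, hdec, rfl⟩
    calc ∑ i, ∑ j, ∑ p, ∑ q, T3 A i j p q * (∑ k, X i j k * X p q k)
        = ∑ m, lam m * ∑ k, (∑ i, ∑ j, X i j k * (u m i * v m j)) *
            (∑ p, ∑ q, X p q k * (w m p * t m q)) := by
          calc ∑ i, ∑ j, ∑ p, ∑ q, T3 A i j p q * (∑ k, X i j k * X p q k)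
              = ∑ i, ∑ j, ∑ p, ∑ q, ∑ m,
                  (lam m * u m i * v m j * w m p * t m q) * (∑ k, X i j k * X p q k) := by
                refine Finset.sum_congr rfl fun i _ => Finset.sum_congr rfl fun j _ =>
                  Finset.sum_congr rfl fun p _ => Finset.sum_congr rfl fun q _ => ?_
                rw [hdec i j p q, Finset.sum_mul]
            _ = ∑ m, ∑ i, ∑ j, ∑ p, ∑ q,
                  (lam m * u m i * v m j * w m p * t m q) * (∑ k, X i j k * X p q k) :=
                sum_swap5 _
            _ = ∑ m, lam m * ∑ i, ∑ j, ∑ p, ∑ q,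
                  ((u m i * v m j) * (w m p * t m q)) * (∑ k, X i j k * X p q k) := by
                refine Finset.sum_congr rfl fun m _ => ?_
                rw [mul_sum4]
                refine Finset.sum_congr rfl fun i _ => Finset.sum_congr rfl fun j _ =>
                  Finset.sum_congr rfl fun p _ => Finset.sum_congr rfl fun q _ => by ring
            _ = ∑ m, lam m * ∑ k, (∑ i, ∑ j, X i j k * (u m i * v m j)) *
                  (∑ p, ∑ q, X p q k * (w m p * t m q)) := by
                refine Finset.sum_congr rfl fun m _ => ?_
                rw [fub2 X (fun i j => u m i * v m j) (fun p q => w m p * t m q)]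
      _ ≤ ∑ m, |lam m| := by
          apply Finset.sum_le_sum
          intro m _
          have hgm := claimg X hX (u m) (v m) (hu m) (hv m)
          have hhm := claimg X hX (w m) (t m) (hw m) (ht m)
          set gg : Fin d3 → ℝ := fun k => ∑ i, ∑ j, X i j k * (u m i * v m j)
          set hh : Fin d3 → ℝ := fun k => ∑ p, ∑ q, X p q k * (w m p * t m q)
          have hcs : (∑ k, gg k * hh k) ^ 2 ≤ 1 := by
            calc (∑ k, gg k * hh k) ^ 2 ≤ (∑ k, gg k ^ 2) * (∑ k, hh k ^ 2) :=
                  Finset.sum_mul_sq_le_sq_mul_sq _ _ _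
              _ ≤ 1 := by
                  have h1 : (0:ℝ) ≤ ∑ k, gg k ^ 2 := Finset.sum_nonneg fun k _ => sq_nonneg _
                  have h2 : (0:ℝ) ≤ ∑ k, hh k ^ 2 := Finset.sum_nonneg fun k _ => sq_nonneg _
                  nlinarith
          have habs : |∑ k, gg k * hh k| ≤ 1 := by
            rw [abs_le]; constructor <;> nlinarith [abs_nonneg (∑ k, gg k * hh k)]
          calc lam m * ∑ k, gg k * hh k ≤ |lam m * ∑ k, gg k * hh k| := le_abs_self _
            _ = |lam m| * |∑ k, gg k * hh k| := abs_mul _ _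
            _ ≤ |lam m| * 1 := by
                exact mul_le_mul_of_nonneg_left habs (abs_nonneg _)
            _ = |lam m| := mul_one _
  calc (∑ k, ∑ i, ∑ j, A i j k * X i j k) ^ 2 = (∑ k, c k) ^ 2 := rfl
    _ ≤ (d3 : ℝ) * ∑ k, c k ^ 2 := step1
    _ ≤ (d3 : ℝ) * ∑ k, ∑ k', (∑ i, ∑ j, A i j k * X i j k') ^ 2 := by
        apply mul_le_mul_of_nonneg_left step2 (Nat.cast_nonneg d3)
    _ = (d3 : ℝ) * (∑ i, ∑ j, ∑ p, ∑ q, T3 A i j p q * (∑ k, X i j k * X p q k)) := by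
        rw [step3]
    _ ≤ (d3 : ℝ) * nuc4 (T3 A) := mul_le_mul_of_nonneg_left step4 (Nat.cast_nonneg d3)

lemma sum_swap3 {α1 α2 α3 : Type*} [Fintype α1] [Fintype α2] [Fintype α3]
    (f : α1 → α2 → α3 → ℝ) :
    ∑ i, ∑ j, ∑ k, f i j k = ∑ k, ∑ i, ∑ j, f i j k := by
  calc ∑ i, ∑ j, ∑ k, f i j k = ∑ i, ∑ k, ∑ j, f i j k :=
        Finset.sum_congr rfl fun i _ => Finset.sum_comm
    _ = ∑ k, ∑ i, ∑ j, f i j k := Finset.sum_comm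

lemma sphere_iff {d : ℕ} (x : EuclideanSpace ℝ (Fin d)) :
    x ∈ sphere (0 : EuclideanSpace ℝ (Fin d)) 1 ↔ ∑ i, x i ^ 2 = 1 := by
  rw [mem_sphere_zero_iff_norm, EuclideanSpace.norm_eq]
  rw [show (∑ i, ‖x i‖ ^ 2) = ∑ i, x i ^ 2 from
    Finset.sum_congr rfl fun i _ => by rw [Real.norm_eq_abs, sq_abs]]
  exact Real.sqrt_eq_one

lemma reorder3 {d1 d2 d3 : ℕ} (X : Fin d1 → Fin d2 → Fin d3 → ℝ) (u : Fin d1 → ℝ)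
    (v : Fin d2 → ℝ) (w : Fin d3 → ℝ) :
    ∑ k, (∑ i, ∑ j, X i j k * (u i * v j)) * w k
      = ∑ p : Fin d1 × Fin d2 × Fin d3, u p.1 * v p.2.1 * w p.2.2 * X p.1 p.2.1 p.2.2 := by
  calc ∑ k, (∑ i, ∑ j, X i j k * (u i * v j)) * w k
      = ∑ k, ∑ i, ∑ j, (X i j k * (u i * v j)) * w k := by
        refine Finset.sum_congr rfl fun k _ => ?_
        rw [Finset.sum_mul]
        exact Finset.sum_congr rfl fun i _ => by rw [Finset.sum_mul]
    _ = ∑ k, ∑ i, ∑ j, u i * v j * w k * X i j k :=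
        Finset.sum_congr rfl fun k _ => Finset.sum_congr rfl fun i _ =>
          Finset.sum_congr rfl fun j _ => by ring
    _ = ∑ i, ∑ j, ∑ k, u i * v j * w k * X i j k := (sum_swap3 _).symm
    _ = ∑ p : Fin d1 × Fin d2 × Fin d3, u p.1 * v p.2.1 * w p.2.2 * X p.1 p.2.1 p.2.2 := by
        simp [Fintype.sum_prod_type]

example : True := trivial
lemma exists_dual {d1 d2 d3 : ℕ} (hd1 : 0 < d1) (hd2 : 0 < d2) (hd3 : 0 < d3)
    (A : Fin d1 → Fin d2 → Fin d3 → ℝ) {t : ℝ} (ht : 0 < t) (htν : t < nuc3 A) :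
    ∃ X : Fin d1 → Fin d2 → Fin d3 → ℝ,
      (∀ (u : Fin d1 → ℝ) (v : Fin d2 → ℝ) (w : Fin d3 → ℝ),
        (∑ i, u i ^ 2 = 1) → (∑ j, v j ^ 2 = 1) → (∑ k, w k ^ 2 = 1) →
        |∑ k, (∑ i, ∑ j, X i j k * (u i * v j)) * w k| ≤ 1) ∧
      t < ∑ k, ∑ i, ∑ j, A i j k * X i j k := by
  classical
  set E1 := EuclideanSpace ℝ (Fin d1)
  set E2 := EuclideanSpace ℝ (Fin d2)
  set E3 := EuclideanSpace ℝ (Fin d3)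
  set V := EuclideanSpace ℝ (Fin d1 × Fin d2 × Fin d3) with hV
  set F : ℝ × (E1 × E2 × E3) → V :=
    (fun q => (WithLp.toLp 2 (fun p : Fin d1 × Fin d2 × Fin d3 => q.1 * q.2.1 p.1 * q.2.2.1 p.2.1 * q.2.2.2 p.2.2) : V)) with hF
  set D : Set (ℝ × (E1 × E2 × E3)) :=
    ({-1, 1} : Set ℝ) ×ˢ ((sphere (0:E1) 1) ×ˢ ((sphere (0:E2) 1) ×ˢ (sphere (0:E3) 1))) with hD
  set S : Set V := F '' D with hS
  have hFcont : Continuous F := by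
    refine (PiLp.continuous_toLp 2 _).comp ?_
    apply continuous_pi
    intro p
    have h1 : Continuous fun q : ℝ × E1 × E2 × E3 => q.1 := continuous_fst
    have h2 : Continuous fun q : ℝ × E1 × E2 × E3 => q.2.1 p.1 :=
      (PiLp.continuous_apply 2 (fun _ : Fin d1 => ℝ) p.1).comp
        (continuous_fst.comp continuous_snd)
    have h3 : Continuous fun q : ℝ × E1 × E2 × E3 => q.2.2.1 p.2.1 :=
      (PiLp.continuous_apply 2 (fun _ : Fin d2 => ℝ) p.2.1).comp
        (continuous_fst.comp (continuous_snd.comp continuous_snd))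
    have h4 : Continuous fun q : ℝ × E1 × E2 × E3 => q.2.2.2 p.2.2 :=
      (PiLp.continuous_apply 2 (fun _ : Fin d3 => ℝ) p.2.2).comp
        (continuous_snd.comp (continuous_snd.comp continuous_snd))
    exact ((h1.mul h2).mul h3).mul h4
  have hDcomp : IsCompact D := by
    refine IsCompact.prod ?_ (IsCompact.prod (isCompact_sphere _ _)
      (IsCompact.prod (isCompact_sphere _ _) (isCompact_sphere _ _)))
    exact (Set.toFinite _).isCompact
  have hScomp : IsCompact S := hDcomp.image hFcont
  have hq0 : ((1 : ℝ), ((WithLp.toLp 2 (bv ⟨0, hd1⟩) : E1), (WithLp.toLp 2 (bv ⟨0, hd2⟩) : E2), (WithLp.toLp 2 (bv ⟨0, hd3⟩) : E3))) ∈ D := by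
    refine ⟨by simp, (sphere_iff _).mpr (bv_unit _), (sphere_iff _).mpr (bv_unit _),
      (sphere_iff _).mpr (bv_unit _)⟩
  have hSne : S.Nonempty := ⟨_, Set.mem_image_of_mem F hq0⟩
  have hKcomp : IsCompact (convexHull ℝ S) := myIsCompact_convexHull hScomp hSne
  have hKconv : Convex ℝ (convexHull ℝ S) := convex_convexHull ℝ S
  set vA : V := (WithLp.toLp 2 (fun p : Fin d1 × Fin d2 × Fin d3 => A p.1 p.2.1 p.2.2) : V) with hvA
  set x₀ : V := t⁻¹ • vA with hx₀def
  -- x₀ is not in the hull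
  have hx₀ : x₀ ∉ convexHull ℝ S := by
    intro hmem
    rw [_root_.convexHull_eq] at hmem
    obtain ⟨ι', T', w', z', hw0, hw1, hzS, hcm⟩ := hmem
    rw [Finset.centerMass_eq_of_sum_1 _ _ hw1] at hcm
    have hz : ∀ i : {x // x ∈ T'}, ∃ q : ℝ × (E1 × E2 × E3), q ∈ D ∧ F q = z' i.1 :=
      fun i => (hzS i.1 i.2)
    choose qd hqD hqF using hz
    set r := T'.card with hr
    set σ : {x // x ∈ T'} ≃ Fin r := T'.equivFin with hσ
    have hmem3 : t ∈ { s : ℝ | ∃ r : ℕ, ∃ lam : Fin r → ℝ, ∃ u : Fin r → Fin d1 → ℝ,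
        ∃ v : Fin r → Fin d2 → ℝ, ∃ w : Fin r → Fin d3 → ℝ,
        (∀ m, ∑ i, u m i ^ 2 = 1) ∧ (∀ m, ∑ j, v m j ^ 2 = 1) ∧ (∀ m, ∑ k, w m k ^ 2 = 1) ∧
        (∀ i j k, A i j k = ∑ m, lam m * u m i * v m j * w m k) ∧
        s = ∑ m, |lam m| } := by
      refine ⟨r, fun m => t * w' (σ.symm m).1 * (qd (σ.symm m)).1,
        fun m => (qd (σ.symm m)).2.1, fun m => (qd (σ.symm m)).2.2.1,
        fun m => (qd (σ.symm m)).2.2.2, ?_, ?_, ?_, ?_, ?_⟩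
      · exact fun m => (sphere_iff _).mp (hqD (σ.symm m)).2.1
      · exact fun m => (sphere_iff _).mp (hqD (σ.symm m)).2.2.1
      · exact fun m => (sphere_iff _).mp (hqD (σ.symm m)).2.2.2
      · intro i j k
        have hcoord := congrArg (fun y : V => y (i, j, k)) hcm
        have hz'val : ∀ m : {x // x ∈ T'}, z' m.1 (i, j, k)
            = (qd m).1 * (qd m).2.1 i * (qd m).2.2.1 j * (qd m).2.2.2 k := by
          intro m
          rw [← hqF m]
        have hsum : (∑ m ∈ T', w' m • z' m) (i, j, k) = ∑ m ∈ T', w' m * z' m (i, j, k) := by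
          rw [WithLp.ofLp_sum, Finset.sum_apply]; rfl
        have hA : t⁻¹ * A i j k = ∑ m ∈ T', w' m * z' m (i, j, k) := by
          rw [← hsum, hcm]; rfl
        have hA2 : A i j k = t * ∑ m ∈ T', w' m * z' m (i, j, k) := by
          rw [← hA, ← mul_assoc, mul_inv_cancel₀ ht.ne', one_mul]
        calc A i j k = t * ∑ m ∈ T', w' m * z' m (i, j, k) := hA2
          _ = ∑ m ∈ T', t * (w' m * z' m (i, j, k)) := Finset.mul_sum _ _ _
          _ = ∑ m : {x // x ∈ T'}, t * (w' m.1 * z' m.1 (i, j, k)) :=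
              (Finset.sum_coe_sort _ _).symm
          _ = ∑ m : Fin r, t * (w' (σ.symm m).1 * z' (σ.symm m).1 (i, j, k)) :=
              (Equiv.sum_comp σ.symm _).symm
          _ = ∑ m : Fin r, (t * w' (σ.symm m).1 * (qd (σ.symm m)).1) *
                (qd (σ.symm m)).2.1 i * (qd (σ.symm m)).2.2.1 j * (qd (σ.symm m)).2.2.2 k := by
              refine Finset.sum_congr rfl fun m _ => ?_
              rw [hz'val (σ.symm m)]
              ring
      · have : ∀ m : Fin r, |t * w' (σ.symm m).1 * (qd (σ.symm m)).1|
            = t * w' (σ.symm m).1 := by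
          intro m
          have h1 : |(qd (σ.symm m)).1| = 1 := by
            rcases (hqD (σ.symm m)).1 with h | h <;> rw [h] <;> norm_num
          rw [abs_mul, h1, mul_one, abs_of_nonneg (mul_nonneg ht.le (hw0 _ (σ.symm m).2))]
        calc t = t * 1 := (mul_one t).symm
          _ = t * ∑ m ∈ T', w' m := by rw [hw1]
          _ = t * ∑ m : {x // x ∈ T'}, w' m.1 := by rw [Finset.sum_coe_sort]
          _ = t * ∑ m : Fin r, w' (σ.symm m).1 := by rw [Equiv.sum_comp σ.symm
                (fun m : {x // x ∈ T'} => w' m.1)]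
          _ = ∑ m : Fin r, t * w' (σ.symm m).1 := Finset.mul_sum _ _ _
          _ = ∑ m : Fin r, |t * w' (σ.symm m).1 * (qd (σ.symm m)).1| :=
              Finset.sum_congr rfl fun m _ => (this m).symm
    have : nuc3 A ≤ t := csInf_le ⟨0, fun s hs => by
      obtain ⟨r', lam, _, _, _, _, _, _, _, rfl⟩ := hs
      exact Finset.sum_nonneg fun m _ => abs_nonneg _⟩ hmem3
    exact absurd htν (not_lt.mpr this)
  obtain ⟨f, uval, hfK, hfx⟩ :=
    geometric_hahn_banach_closed_point hKconv hKcomp.isClosed hx₀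
  set bb : E1 × E2 × E3 := ((WithLp.toLp 2 (bv ⟨0, hd1⟩) : E1), (WithLp.toLp 2 (bv ⟨0, hd2⟩) : E2), (WithLp.toLp 2 (bv ⟨0, hd3⟩) : E3)) with hbb
  have hq1 : ((-1 : ℝ), bb) ∈ D := by
    refine ⟨by simp, hq0.2⟩
  have h0K : (0 : V) ∈ convexHull ℝ S := by
    have hs1 : F (1, bb) ∈ S := Set.mem_image_of_mem F hq0
    have hs2 : F (-1, bb) ∈ S := Set.mem_image_of_mem F hq1
    have hzero : (0 : V) = (1/2 : ℝ) • F (1, bb) + (1/2 : ℝ) • F (-1, bb) := by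
      ext p
      show (0 : ℝ) = 1/2 * (1 * bb.1 p.1 * bb.2.1 p.2.1 * bb.2.2 p.2.2)
        + 1/2 * ((-1) * bb.1 p.1 * bb.2.1 p.2.1 * bb.2.2 p.2.2)
      ring
    rw [hzero]
    exact hKconv (subset_convexHull ℝ S hs1) (subset_convexHull ℝ S hs2)
      (by norm_num) (by norm_num) (by norm_num)
  have hu0 : 0 < uval := by
    have := hfK 0 h0K
    simpa using this
  set b := EuclideanSpace.basisFun (Fin d1 × Fin d2 × Fin d3) ℝ with hb
  have hrep : ∀ y : V, f y = ∑ p : Fin d1 × Fin d2 × Fin d3, y p * f (b p) := by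
    intro y
    conv_lhs => rw [← b.sum_repr y]
    rw [map_sum]
    refine Finset.sum_congr rfl fun p _ => ?_
    rw [map_smul, EuclideanSpace.basisFun_repr]
    rfl
  set X : Fin d1 → Fin d2 → Fin d3 → ℝ := fun i j k => f (b (i, j, k)) / uval with hXdef
  have hXp : ∀ p : Fin d1 × Fin d2 × Fin d3, X p.1 p.2.1 p.2.2 = f (b p) / uval := by
    intro p; rw [hXdef]
  refine ⟨X, ?_, ?_⟩
  · intro u v w hu hv hw
    have hmemD : ∀ e : ℝ, e ∈ ({-1, 1} : Set ℝ) → (e, ((WithLp.toLp 2 u : E1), (WithLp.toLp 2 v : E2), (WithLp.toLp 2 w : E3))) ∈ D :=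
      fun e he => ⟨he, (sphere_iff _).mpr hu, (sphere_iff _).mpr hv, (sphere_iff _).mpr hw⟩
    have hval : ∀ e : ℝ, f (F (e, ((WithLp.toLp 2 u : E1), (WithLp.toLp 2 v : E2), (WithLp.toLp 2 w : E3))))
        = e * ∑ p : Fin d1 × Fin d2 × Fin d3, u p.1 * v p.2.1 * w p.2.2 * f (b p) := by
      intro e
      rw [hrep, Finset.mul_sum]
      refine Finset.sum_congr rfl fun p _ => ?_
      show (e * u p.1 * v p.2.1 * w p.2.2) * f (b p)
        = e * (u p.1 * v p.2.1 * w p.2.2 * f (b p))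
      ring
    set Sg : ℝ := ∑ p : Fin d1 × Fin d2 × Fin d3, u p.1 * v p.2.1 * w p.2.2 * f (b p) with hSg
    have h1 : Sg < uval := by
      have := hfK _ (subset_convexHull ℝ S (Set.mem_image_of_mem F (hmemD 1 (by simp))))
      rw [hval 1] at this
      simpa using this
    have h2 : -Sg < uval := by
      have := hfK _ (subset_convexHull ℝ S (Set.mem_image_of_mem F (hmemD (-1) (by simp))))
      rw [hval (-1)] at this
      simpa using this
    have habs : |Sg| ≤ uval := (abs_le.mpr ⟨by linarith, h1.le⟩)
    have hcomp : ∑ k, (∑ i, ∑ j, X i j k * (u i * v j)) * w k = Sg / uval := by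
      rw [reorder3 X u v w]
      rw [show (∑ p : Fin d1 × Fin d2 × Fin d3,
          u p.1 * v p.2.1 * w p.2.2 * X p.1 p.2.1 p.2.2)
        = ∑ p : Fin d1 × Fin d2 × Fin d3,
          (u p.1 * v p.2.1 * w p.2.2 * f (b p)) / uval from
        Finset.sum_congr rfl fun p _ => by rw [hXp p, mul_div_assoc]]
      rw [← Finset.sum_div, hSg]
    rw [hcomp, abs_div, abs_of_pos hu0, div_le_one hu0]
    exact habs
  · have hfvA : f vA = ∑ p : Fin d1 × Fin d2 × Fin d3,
        A p.1 p.2.1 p.2.2 * f (b p) := hrep vA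
    have hfx₀ : f x₀ = t⁻¹ * f vA := by
      rw [hx₀def, map_smul]; rfl
    have hSA : t * uval < f vA := by
      have h := hfx
      rw [hfx₀] at h
      calc t * uval < t * (t⁻¹ * f vA) := by
            exact (mul_lt_mul_iff_right₀ ht).mpr h
        _ = f vA := by rw [← mul_assoc, mul_inv_cancel₀ ht.ne', one_mul]
    have hcomp : ∑ k, ∑ i, ∑ j, A i j k * X i j k = f vA / uval := by
      calc ∑ k, ∑ i, ∑ j, A i j k * X i j k
          = ∑ i, ∑ j, ∑ k, A i j k * X i j k := (sum_swap3 _).symm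
        _ = ∑ p : Fin d1 × Fin d2 × Fin d3,
            A p.1 p.2.1 p.2.2 * X p.1 p.2.1 p.2.2 := by
            simp [Fintype.sum_prod_type]
        _ = ∑ p : Fin d1 × Fin d2 × Fin d3,
            (A p.1 p.2.1 p.2.2 * f (b p)) / uval := by
            refine Finset.sum_congr rfl fun p _ => ?_
            rw [hXp p, mul_div_assoc]
        _ = f vA / uval := by rw [← Finset.sum_div, hfvA]
    rw [hcomp]
    rw [lt_div_iff₀ hu0]
    exact hSA
theorem stmt12 {d1 d2 d3 : ℕ} (A : Fin d1 → Fin d2 → Fin d3 → ℝ) :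
    nuc4 (T3 A) ≥ (1 / (d3 : ℝ)) * nuc3 A ^ 2 := by
  classical
  by_cases hd : 0 < d1 ∧ 0 < d2 ∧ 0 < d3
  · obtain ⟨hd1, hd2, hd3⟩ := hd
    rcases eq_or_lt_of_le (nuc3_nonneg A) with hν | hν
    · rw [← hν]
      simpa using nuc4_nonneg (T3 A)
    have hd3' : (0 : ℝ) < d3 := by exact_mod_cast hd3
    set C : ℝ := (d3 : ℝ) * nuc4 (T3 A) with hC
    have hCnn : 0 ≤ C := mul_nonneg (Nat.cast_nonneg d3) (nuc4_nonneg _)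
    have P : ∀ t : ℝ, 0 < t → t < nuc3 A → t ^ 2 ≤ C := by
      intro t ht htν
      obtain ⟨X, hX, hAX⟩ := exists_dual hd1 hd2 hd3 A ht htν
      have hk := key A X hX
      nlinarith
    have hsq : nuc3 A ^ 2 ≤ C := by
      by_contra hcon
      push_neg at hcon
      have hsC : Real.sqrt C < nuc3 A := by
        nlinarith [Real.sqrt_nonneg C, Real.sq_sqrt hCnn]
      set t : ℝ := (Real.sqrt C + nuc3 A) / 2 with htdef
      have ht0 : 0 < t := by
        have := Real.sqrt_nonneg C
        rw [htdef]; linarith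
      have htν : t < nuc3 A := by rw [htdef]; linarith
      have hst : Real.sqrt C < t := by rw [htdef]; linarith
      have := P t ht0 htν
      nlinarith [Real.sqrt_nonneg C, Real.sq_sqrt hCnn]
    rw [ge_iff_le]
    calc (1 / (d3 : ℝ)) * nuc3 A ^ 2 ≤ (1 / (d3 : ℝ)) * C := by
          apply mul_le_mul_of_nonneg_left hsq
          positivity
      _ = nuc4 (T3 A) := by
          rw [hC]
          field_simp
  · have hdim : d1 = 0 ∨ d2 = 0 ∨ d3 = 0 := by
      by_contra hcon
      push_neg at hcon
      exact hd ⟨Nat.pos_of_ne_zero hcon.1, Nat.pos_of_ne_zero hcon.2.1,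
        Nat.pos_of_ne_zero hcon.2.2⟩
    have h0mem : (0 : ℝ) ∈ { s : ℝ | ∃ r : ℕ, ∃ lam : Fin r → ℝ, ∃ u : Fin r → Fin d1 → ℝ,
        ∃ v : Fin r → Fin d2 → ℝ, ∃ w : Fin r → Fin d3 → ℝ,
        (∀ m, ∑ i, u m i ^ 2 = 1) ∧ (∀ m, ∑ j, v m j ^ 2 = 1) ∧ (∀ m, ∑ k, w m k ^ 2 = 1) ∧
        (∀ i j k, A i j k = ∑ m, lam m * u m i * v m j * w m k) ∧
        s = ∑ m, |lam m| } := by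
      refine ⟨0, Fin.elim0, Fin.elim0, Fin.elim0, Fin.elim0, fun m => m.elim0,
        fun m => m.elim0, fun m => m.elim0, ?_, by simp⟩
      intro i j k
      rcases hdim with h | h | h
      · subst h; exact i.elim0
      · subst h; exact j.elim0
      · subst h; exact k.elim0
    have h0 : nuc3 A = 0 := by
      refine le_antisymm ?_ (nuc3_nonneg A)
      refine csInf_le ⟨0, fun s hs => ?_⟩ h0mem
      obtain ⟨r, lam, u, v, w, _, _, _, _, rfl⟩ := hs
      exact Finset.sum_nonneg fun m _ => abs_nonneg _
    rw [h0]
    simpa using nuc4_nonneg (T3 A)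
end
end

section
/- If a biquadratic tensor T is diagonal with respect to its second and fourth indices (t_{ijpq} = 0 whenever j ≠ q), then the spectral norm of T equals max_j ρ((t_{ijpj})_{i,p}), the maximum over j of the spectral radii of the symmetric slice matrices. -/
noncomputable section

/-- Spectral radius of a symmetric matrix, as the maximum of `|sᵀ M s|` over unit vectors. -/
noncomputable def raySup {n : Type*} [Fintype n] (M : Matrix n n ℝ) : ℝ :=
  sSup { r : ℝ | ∃ s : n → ℝ, (∑ i, s i ^ 2 = 1) ∧ r = |∑ i, ∑ j, M i j * s i * s j| }

/-!
For `T` diagonal in its second and fourth indices the biquadratic form splits as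
`bform T x y = ∑ⱼ yⱼ² (xᵀ Mⱼ x)` with `Mⱼ = (t_{ijpj})_{i,p}`. Since `∑ⱼ yⱼ² = 1` this is a convex
combination, so `|bform T x y| ≤ maxⱼ ρ(Mⱼ)`; conversely `y = eⱼ` gives `bform T x eⱼ = xᵀ Mⱼ x`.
-/

open Finset

section UnitVectors

variable {ι : Type*} [Fintype ι]

lemma sum_sq_single_one [DecidableEq ι] (j : ι) : ∑ i, (Pi.single j 1 : ι → ℝ) i ^ 2 = 1 := by
  simp [Pi.single_apply, ite_pow]

end UnitVectors

section raySup

variable {n : Type*} [Fintype n]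

lemma abs_quadForm_le_raySup (M : Matrix n n ℝ) {s : n → ℝ} (hs : ∑ i, s i ^ 2 = 1) :
    |∑ i, ∑ j, M i j * s i * s j| ≤ raySup M := by
  refine le_csSup ⟨∑ i, ∑ j, |M i j|, ?_⟩ ⟨s, hs, rfl⟩
  rintro r ⟨t, ht, rfl⟩
  refine (abs_sum_le_sum_abs _ _).trans (sum_le_sum fun i _ => ?_)
  refine (abs_sum_le_sum_abs _ _).trans (sum_le_sum fun j _ => ?_)
  calc |M i j * t i * t j| = |M i j| * |t i| * |t j| := by rw [abs_mul, abs_mul]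
    _ ≤ |M i j| * 1 * 1 := by gcongr <;> exact abs_le_one_of_sum_sq_eq_one ht _
    _ = |M i j| := by ring

lemma raySup_nonneg (M : Matrix n n ℝ) : 0 ≤ raySup M :=
  Real.sSup_nonneg fun _ ⟨_, _, hr⟩ => hr ▸ abs_nonneg _

end raySup

section Biquadratic

variable {d1 d2 : ℕ} (T : Fin d1 → Fin d2 → Fin d1 → Fin d2 → ℝ)

lemma abs_bform_le_bSpec {x : Fin d1 → ℝ} {y : Fin d2 → ℝ} (hx : ∑ i, x i ^ 2 = 1)
    (hy : ∑ j, y j ^ 2 = 1) : |bform T x y| ≤ bSpec T := by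
  refine le_csSup ⟨∑ i, ∑ j, ∑ p, ∑ q, |T i j p q|, ?_⟩ ⟨x, y, hx, hy, rfl⟩
  rintro r ⟨x, y, hx, hy, rfl⟩
  refine (abs_sum_le_sum_abs _ _).trans (sum_le_sum fun i _ => ?_)
  refine (abs_sum_le_sum_abs _ _).trans (sum_le_sum fun j _ => ?_)
  refine (abs_sum_le_sum_abs _ _).trans (sum_le_sum fun p _ => ?_)
  refine (abs_sum_le_sum_abs _ _).trans (sum_le_sum fun q _ => ?_)
  calc |T i j p q * x i * y j * x p * y q|
      = |T i j p q| * |x i| * |y j| * |x p| * |y q| := by simp only [abs_mul]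
    _ ≤ |T i j p q| * 1 * 1 * 1 * 1 := by
        gcongr <;> first
          | exact abs_le_one_of_sum_sq_eq_one hx _
          | exact abs_le_one_of_sum_sq_eq_one hy _
    _ = |T i j p q| := by ring

lemma bSpec_nonneg : 0 ≤ bSpec T :=
  Real.sSup_nonneg fun _ ⟨_, _, _, _, hr⟩ => hr ▸ abs_nonneg _

def diagSlice (j : Fin d2) : Matrix (Fin d1) (Fin d1) ℝ := Matrix.of fun i p => T i j p j

variable {T}

lemma bform_eq_sum_sq_mul_of_diag (hdiag : ∀ i j p q, j ≠ q → T i j p q = 0)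
    (x : Fin d1 → ℝ) (y : Fin d2 → ℝ) :
    bform T x y = ∑ j, y j ^ 2 * ∑ i, ∑ p, diagSlice T j i p * x i * x p := by
  have hq : ∀ i j p, ∑ q, T i j p q * x i * y j * x p * y q
      = T i j p j * x i * y j * x p * y j := fun i j p =>
    sum_eq_single_of_mem j (mem_univ j) fun q _ hq => by rw [hdiag i j p q hq.symm]; ring
  simp only [bform, hq, diagSlice, Matrix.of_apply, mul_sum]
  rw [sum_comm]
  refine sum_congr rfl fun j _ => sum_congr rfl fun i _ => sum_congr rfl fun p _ => ?_
  ring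

lemma bform_single_of_diag (hdiag : ∀ i j p q, j ≠ q → T i j p q = 0)
    (x : Fin d1 → ℝ) (j : Fin d2) :
    bform T x (Pi.single j 1) = ∑ i, ∑ p, diagSlice T j i p * x i * x p := by
  rw [bform_eq_sum_sq_mul_of_diag hdiag, sum_eq_single_of_mem j (mem_univ j)]
  · simp
  · intro k _ hk
    simp [hk]

lemma raySup_diagSlice_le_bSpec (hdiag : ∀ i j p q, j ≠ q → T i j p q = 0) (j : Fin d2) :
    raySup (diagSlice T j) ≤ bSpec T := by
  refine Real.sSup_le ?_ (bSpec_nonneg T)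
  rintro r ⟨x, hx, rfl⟩
  rw [← bform_single_of_diag hdiag]
  exact abs_bform_le_bSpec T hx (sum_sq_single_one j)

lemma abs_bform_le_of_diag (hdiag : ∀ i j p q, j ≠ q → T i j p q = 0) {c : ℝ}
    (hc : ∀ j, raySup (diagSlice T j) ≤ c) {x : Fin d1 → ℝ} {y : Fin d2 → ℝ}
    (hx : ∑ i, x i ^ 2 = 1) (hy : ∑ j, y j ^ 2 = 1) : |bform T x y| ≤ c := by
  rw [bform_eq_sum_sq_mul_of_diag hdiag]
  calc |∑ j, y j ^ 2 * ∑ i, ∑ p, diagSlice T j i p * x i * x p|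
      ≤ ∑ j, y j ^ 2 * |∑ i, ∑ p, diagSlice T j i p * x i * x p| := by
        refine (abs_sum_le_sum_abs _ _).trans_eq (sum_congr rfl fun j _ => ?_)
        rw [abs_mul, abs_sq]
    _ ≤ ∑ j, y j ^ 2 * c := by
        gcongr with j
        exact (abs_quadForm_le_raySup _ hx).trans (hc j)
    _ = c := by rw [← sum_mul, hy, one_mul]

end Biquadratic

theorem stmt17_general {d1 d2 : ℕ} (T : Fin d1 → Fin d2 → Fin d1 → Fin d2 → ℝ)
    (hdiag : ∀ i j p q, j ≠ q → T i j p q = 0) :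
    bSpec T = sSup { r : ℝ | ∃ j : Fin d2, r = raySup (Matrix.of fun i p => T i j p j) } := by
  set S := { r : ℝ | ∃ j : Fin d2, r = raySup (diagSlice T j) }
  have hS : BddAbove S := by
    simpa only [S, eq_comm, Set.range] using (Set.finite_range fun j => raySup (diagSlice T j)).bddAbove
  have hslice_le : ∀ j, raySup (diagSlice T j) ≤ sSup S := fun j => le_csSup hS ⟨j, rfl⟩
  apply le_antisymm
  · refine Real.sSup_le ?_ (Real.sSup_nonneg ?_)
    · rintro r ⟨x, y, hx, hy, rfl⟩
      exact abs_bform_le_of_diag hdiag hslice_le hx hy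
    · rintro r ⟨j, rfl⟩
      exact raySup_nonneg _
  · refine Real.sSup_le ?_ (bSpec_nonneg T)
    rintro r ⟨j, rfl⟩
    exact raySup_diagSlice_le_bSpec hdiag j

theorem stmt17 {d1 d2 : ℕ} (T : Fin d1 → Fin d2 → Fin d1 → Fin d2 → ℝ)
    (hT : Biquadratic T) (hdiag : ∀ i j p q, j ≠ q → T i j p q = 0) :
    bSpec T = sSup { r : ℝ | ∃ j : Fin d2, r = raySup (Matrix.of fun i p => T i j p j) } :=
  stmt17_general T hdiag
end
end
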